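/- Empirical ℋ-divergence via classification error: let X_S and X_T each be finite samples of size m, and for h : 𝒵 → {0,1} define the labeling error err(h) = (1/(2m))(Σ_{x∈X_S} 𝟙[h(x)=0] + Σ_{x∈X_T} 𝟙[h(x)=1]). If ℋ is symmetric (closed under h ↦ 1−h), then the empirical divergence 2 max_{h∈ℋ} |(1/m)Σ_{x∈X_S} 𝟙[h(x)=1] − (1/m)Σ_{x∈X_T} 𝟙[h(x)=1]| equals 2(1 − 2 min_{h∈ℋ} err(h)). -/
import Mathlib


open scoped BigOperators

/-- Empirical ℋ-divergence via minimal balanced classification error: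
if the finite hypothesis class `H` is closed under complementation, then
`2 max_{h∈H} |(1/m)Σ_{x∈X_S} 𝟙[h(x)=1] − (1/m)Σ_{x∈X_T} 𝟙[h(x)=1]|
  = 2 (1 − 2 min_{h∈H} err(h))`,
where `err(h) = (1/(2m)) (Σ_{x∈X_S} 𝟙[h(x)=0] + Σ_{x∈X_T} 𝟙[h(x)=1])`. -/
theorem empirical_HDivergence_eq_error
    {𝒵 : Type*} (m : ℕ) (hm : 0 < m)
    (XS XT : Fin m → 𝒵)
    (H : Finset (𝒵 → Bool)) (hne : H.Nonempty)
    (hsymm : ∀ h ∈ H, (fun x => !(h x)) ∈ H) :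
    let err : (𝒵 → Bool) → ℝ := fun h =>
      (1 / (2 * (m : ℝ))) *
        ((∑ i, if h (XS i) = false then (1 : ℝ) else 0) +
         (∑ i, if h (XT i) = true then (1 : ℝ) else 0))
    2 * (H.sup' hne fun h =>
          |(1 / (m : ℝ)) * (∑ i, if h (XS i) = true then (1 : ℝ) else 0) -
           (1 / (m : ℝ)) * (∑ i, if h (XT i) = true then (1 : ℝ) else 0)|)
      = 2 * (1 - 2 * H.inf' hne err) := by
  intro err
  have hm' : (0:ℝ) < m := by exact_mod_cast hm
  have herr : ∀ h : 𝒵 → Bool, err h = (1 / (2 * (m : ℝ))) *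
        ((∑ i, if h (XS i) = false then (1 : ℝ) else 0) +
         (∑ i, if h (XT i) = true then (1 : ℝ) else 0)) := fun h => rfl
  set f : (𝒵 → Bool) → ℝ := fun h =>
    (1 / (m : ℝ)) * (∑ i, if h (XS i) = true then (1 : ℝ) else 0) -
    (1 / (m : ℝ)) * (∑ i, if h (XT i) = true then (1 : ℝ) else 0) with hf
  have hfval : ∀ h : 𝒵 → Bool, f h =
      (1 / (m : ℝ)) * (∑ i, if h (XS i) = true then (1 : ℝ) else 0) -
      (1 / (m : ℝ)) * (∑ i, if h (XT i) = true then (1 : ℝ) else 0) := fun h => rfl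
  -- counting complements on the source sample
  have hAS : ∀ h : 𝒵 → Bool, (∑ i, if h (XS i) = false then (1:ℝ) else 0)
      = m - ∑ i, if h (XS i) = true then (1:ℝ) else 0 := by
    intro h
    have hsum : ((∑ i, if h (XS i) = false then (1:ℝ) else 0)
        + ∑ i, if h (XS i) = true then (1:ℝ) else 0) = (m:ℝ) := by
      rw [← Finset.sum_add_distrib]
      have h1 : ∀ i : Fin m, ((if h (XS i) = false then (1:ℝ) else 0) +
          if h (XS i) = true then (1:ℝ) else 0) = 1 := by
        intro i; cases h (XS i) <;> simp
      simp [h1]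
    linarith
  have hAT : ∀ h : 𝒵 → Bool, (∑ i, if h (XT i) = false then (1:ℝ) else 0)
      = m - ∑ i, if h (XT i) = true then (1:ℝ) else 0 := by
    intro h
    have hsum : ((∑ i, if h (XT i) = false then (1:ℝ) else 0)
        + ∑ i, if h (XT i) = true then (1:ℝ) else 0) = (m:ℝ) := by
      rw [← Finset.sum_add_distrib]
      have h1 : ∀ i : Fin m, ((if h (XT i) = false then (1:ℝ) else 0) +
          if h (XT i) = true then (1:ℝ) else 0) = 1 := by
        intro i; cases h (XT i) <;> simp
      simp [h1]
    linarith
  have hferr : ∀ h, f h = 1 - 2 * err h := by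
    intro h
    rw [hfval h, herr h, hAS h]
    field_simp
    ring
  have hfneg : ∀ h : 𝒵 → Bool, f (fun x => !(h x)) = - f h := by
    intro h
    rw [hfval (fun x => !(h x)), hfval h]
    simp only [Bool.not_eq_true']
    rw [hAS h, hAT h]
    ring
  congr 1
  show (H.sup' hne fun h => |f h|) = 1 - 2 * H.inf' hne err
  apply le_antisymm
  · apply Finset.sup'_le
    intro h hh
    have h1 : Finset.inf' H hne err ≤ err h := Finset.inf'_le _ hh
    have h2 : Finset.inf' H hne err ≤ err (fun x => !(h x)) :=
      Finset.inf'_le _ (hsymm h hh)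
    rw [abs_le]
    constructor
    · have e1 := hferr (fun x => !(h x))
      rw [hfneg h] at e1
      linarith
    · have e2 := hferr h
      linarith
  · obtain ⟨h0, hh0, hE⟩ := Finset.exists_mem_eq_inf' hne err
    have hle : f h0 ≤ Finset.sup' H hne fun h => |f h| :=
      le_trans (le_abs_self _) (Finset.le_sup' (fun h => |f h|) hh0)
    have e0 := hferr h0
    rw [hE]
    linarith
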